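/- arXiv:1712.01206 — 2 statements merged into one kernel-verified Lean document; each statement's English description precedes it below -/
import Mathlib

section
/- Let n ≥ 0 and fix signs ε_R ∈ {-1,1} for all dyadic rectangles R of area 2^{-n} in [0,1)². Let R₁ be a dyadic rectangle in layer L_k and let G(x,y) = ∑_{R ∈ L_m, m > k} ε_R h_R(x,y). Then for every integer v, the measure of {p ∈ R₁ : h_{R₁}(p) + G(p) = v} equals the measure of {p ∈ R₁ : -h_{R₁}(p) + G(p) = v}. -/
open MeasureTheory Finset

noncomputable section

/-- The dyadic interval `[m·2^{-k}, (m+1)·2^{-k})`. -/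
def dyadicI (k m : ℕ) : Set ℝ :=
  Set.Ico ((m : ℝ) * (2:ℝ)^(-(k:ℤ))) (((m : ℝ) + 1) * (2:ℝ)^(-(k:ℤ)))

/-- The Haar function of the dyadic interval `[m·2^{-k}, (m+1)·2^{-k})`:
`-1` on the left half, `+1` on the right half, `0` outside. -/
def haarI (k m : ℕ) (x : ℝ) : ℝ :=
  if x ∈ Set.Ico ((m : ℝ) * (2:ℝ)^(-(k:ℤ))) (((m : ℝ) + 1/2) * (2:ℝ)^(-(k:ℤ))) then -1
  else if x ∈ Set.Ico (((m : ℝ) + 1/2) * (2:ℝ)^(-(k:ℤ))) (((m : ℝ) + 1) * (2:ℝ)^(-(k:ℤ))) then 1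
  else 0

/-- The Haar function of the dyadic rectangle `[m·2^{-k},(m+1)·2^{-k}) × [m'·2^{-j},(m'+1)·2^{-j})`. -/
def haarR (k m j m' : ℕ) (p : ℝ × ℝ) : ℝ := haarI k m p.1 * haarI j m' p.2

/-- The signed small ball sum `∑_{|R| = 2^{-n}} ε_R h_R`, where the rectangle of the layer `k`
with horizontal index `m` and vertical index `m'` carries the sign `ε k m m'`. -/
def signedSum (n : ℕ) (ε : ℕ → ℕ → ℕ → ℝ) (p : ℝ × ℝ) : ℝ :=
  ∑ k ∈ Finset.range (n+1), ∑ m ∈ Finset.range (2^k), ∑ m' ∈ Finset.range (2^(n-k)),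
    ε k m m' * haarR k m (n-k) m' p

/-- `rad j t = 1` if the `j`-th binary digit `⌊2^j t⌋ mod 2` of `t` is `1`, `-1` otherwise. -/
def rad (j : ℕ) (t : ℝ) : ℝ := if ⌊(2:ℝ)^j * t⌋ % 2 = 1 then 1 else -1

/-!
Write `R₁ = I × J`. A rectangle of a higher layer `j > k` has vertical side of length
`2^{j-n} ≥ 2 |J|`, so `J` lies in one half of it and its Haar function does not depend on `y ∈ J`;
hence neither does `G`. On each vertical fibre `{x} × J` the function `±h_{R₁} + G` therefore
takes one value on the lower half of `J` and another on the upper half, and flipping the sign of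
`h_{R₁}` just swaps these two halves, which have the same length.
-/

lemma mem_dyadicI_iff_floor {k m : ℕ} {y : ℝ} : y ∈ dyadicI k m ↔ ⌊(2:ℝ) ^ k * y⌋ = m := by
  have h2k : (0:ℝ) < 2 ^ k := by positivity
  rw [dyadicI, Set.mem_Ico, zpow_neg, zpow_natCast, Int.floor_eq_iff, mul_inv_le_iff₀' h2k,
    lt_mul_inv_iff₀' h2k]
  push_cast
  rfl

lemma floor_two_pow_mul_eq_floor_div {j L : ℕ} (h : j ≤ L) (y : ℝ) :
    ⌊(2:ℝ) ^ j * y⌋ = ⌊(2:ℝ) ^ L * y⌋ / (2 ^ (L - j) : ℕ) := by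
  rw [← Int.floor_div_natCast]
  congr 1
  rw [Nat.cast_pow, Nat.cast_ofNat, ← Nat.sub_add_cancel h, pow_add, Nat.add_sub_cancel]
  field_simp

lemma dyadicI_eq_union (k m : ℕ) :
    dyadicI k m = dyadicI (k + 1) (2 * m) ∪ dyadicI (k + 1) (2 * m + 1) := by
  ext y
  simp only [Set.mem_union, mem_dyadicI_iff_floor,
    floor_two_pow_mul_eq_floor_div (Nat.le_add_right k 1) y, Nat.add_sub_cancel_left, pow_one]
  push_cast
  omega

lemma haarI_eq_ite (k m : ℕ) (y : ℝ) :
    haarI k m y = if ⌊(2:ℝ) ^ (k + 1) * y⌋ = 2 * m then -1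
      else if ⌊(2:ℝ) ^ (k + 1) * y⌋ = 2 * m + 1 then 1 else 0 := by
  have hscale : ∀ a : ℝ, a * (2:ℝ) ^ (-(k:ℤ)) = (2 * a) * (2:ℝ) ^ (-((k + 1 : ℕ):ℤ)) := by
    intro a
    rw [Nat.cast_succ, neg_add, zpow_add₀ two_ne_zero]
    ring
  have hleft : Set.Ico ((m:ℝ) * 2 ^ (-(k:ℤ))) ((m + 1 / 2) * 2 ^ (-(k:ℤ))) =
      dyadicI (k + 1) (2 * m) := by
    rw [dyadicI, hscale, hscale]
    push_cast
    ring_nf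
  have hright : Set.Ico ((m + 1 / 2 : ℝ) * 2 ^ (-(k:ℤ))) ((m + 1) * 2 ^ (-(k:ℤ))) =
      dyadicI (k + 1) (2 * m + 1) := by
    rw [dyadicI, hscale, hscale]
    push_cast
    ring_nf
  simp only [haarI, hleft, hright, mem_dyadicI_iff_floor]
  push_cast
  rfl

lemma disjoint_dyadicI {k a b : ℕ} (h : a ≠ b) : Disjoint (dyadicI k a) (dyadicI k b) :=
  Set.disjoint_left.2 fun y ha hb => h <| by
    rw [mem_dyadicI_iff_floor] at ha hb
    exact_mod_cast ha.symm.trans hb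

lemma volume_dyadicI (k m : ℕ) : volume (dyadicI k m) = ENNReal.ofReal (2 ^ (-(k:ℤ))) := by
  rw [dyadicI, Real.volume_Ico]
  ring_nf

lemma nonempty_dyadicI (k m : ℕ) : (dyadicI k m).Nonempty :=
  Set.nonempty_Ico.2 <| mul_lt_mul_of_pos_right (lt_add_one _) (by positivity)

lemma haarI_eq_of_mem_dyadicI {j L M m : ℕ} (h : j < L) {y y' : ℝ}
    (hy : y ∈ dyadicI L M) (hy' : y' ∈ dyadicI L M) : haarI j m y = haarI j m y' := by
  have hfloor : ⌊(2:ℝ) ^ (j + 1) * y⌋ = ⌊(2:ℝ) ^ (j + 1) * y'⌋ := by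
    rw [floor_two_pow_mul_eq_floor_div h, floor_two_pow_mul_eq_floor_div h,
      mem_dyadicI_iff_floor.1 hy, mem_dyadicI_iff_floor.1 hy']
  rw [haarI_eq_ite, haarI_eq_ite, hfloor]

lemma measure_setOf_mem_and {α : Type*} [MeasurableSpace α] (μ : Measure α) (s : Set α)
    (p : Prop) [Decidable p] : μ {x | x ∈ s ∧ p} = if p then μ s else 0 := by
  split_ifs <;> simp [*]

open Classical in
lemma volume_setOf_mem_dyadicI_haarI (k m : ℕ) (P : ℝ → Prop) :
    volume {y | y ∈ dyadicI k m ∧ P (haarI k m y)} =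
      (if P (-1) then volume (dyadicI (k + 1) 0) else 0) +
        (if P 1 then volume (dyadicI (k + 1) 0) else 0) := by
  have hsplit : {y | y ∈ dyadicI k m ∧ P (haarI k m y)} =
      {y | y ∈ dyadicI (k + 1) (2 * m) ∧ P (-1)} ∪
        {y | y ∈ dyadicI (k + 1) (2 * m + 1) ∧ P 1} := by
    ext y
    simp only [Set.mem_ofPred_eq, Set.mem_union, dyadicI_eq_union k m, mem_dyadicI_iff_floor,
      haarI_eq_ite]
    aesop
  rw [hsplit, measure_union, measure_setOf_mem_and, measure_setOf_mem_and, volume_dyadicI,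
    volume_dyadicI, volume_dyadicI]
  · exact (disjoint_dyadicI (by omega)).mono (fun _ h => h.1) (fun _ h => h.1)
  · exact measurableSet_Ico.inter (MeasurableSet.const _)

lemma volume_setOf_mem_dyadicI_neg_haarI (k m : ℕ) (P : ℝ → Prop) :
    volume {y | y ∈ dyadicI k m ∧ P (-haarI k m y)} =
      volume {y | y ∈ dyadicI k m ∧ P (haarI k m y)} := by
  rw [volume_setOf_mem_dyadicI_haarI k m (fun u => P (-u)), volume_setOf_mem_dyadicI_haarI,
    add_comm]
  congr 2
  rw [neg_neg]

@[fun_prop]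
lemma measurable_haarI (k m : ℕ) : Measurable (haarI k m) :=
  measurable_const.ite measurableSet_Ico (measurable_const.ite measurableSet_Ico measurable_const)

lemma volume_setOf_neg_mul_haarI_add_eq {I : Set ℝ} (hI : MeasurableSet I) (k m : ℕ) {f : ℝ → ℝ}
    (hf : Measurable f) {G : ℝ × ℝ → ℝ} (hG : Measurable G)
    (hconst : ∀ x, ∀ y ∈ dyadicI k m, ∀ y' ∈ dyadicI k m, G (x, y) = G (x, y')) (v : ℝ) :
    volume {p : ℝ × ℝ | p ∈ I ×ˢ dyadicI k m ∧ -(f p.1 * haarI k m p.2) + G p = v} =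
      volume {p : ℝ × ℝ | p ∈ I ×ˢ dyadicI k m ∧ f p.1 * haarI k m p.2 + G p = v} := by
  obtain ⟨y₀, hy₀⟩ := nonempty_dyadicI k m
  have hfiber : ∀ (F : ℝ → ℝ → ℝ) x,
      Prod.mk x ⁻¹' {p : ℝ × ℝ | p ∈ I ×ˢ dyadicI k m ∧ F (f p.1) (haarI k m p.2) + G p = v} =
        {y | y ∈ dyadicI k m ∧ (x ∈ I ∧ F (f x) (haarI k m y) + G (x, y₀) = v)} := by
    intro F x
    ext y
    simp only [Set.mem_preimage, Set.mem_ofPred_eq, Set.mem_prod]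
    constructor
    · rintro ⟨⟨hx, hy⟩, hv⟩
      exact ⟨hy, hx, hconst x y₀ hy₀ y hy ▸ hv⟩
    · rintro ⟨hy, hx, hv⟩
      exact ⟨⟨hx, hy⟩, hconst x y hy y₀ hy₀ ▸ hv⟩
  have hmeas : ∀ F : ℝ → ℝ → ℝ, Measurable (Function.uncurry F) → MeasurableSet
      {p : ℝ × ℝ | p ∈ I ×ˢ dyadicI k m ∧ F (f p.1) (haarI k m p.2) + G p = v} := fun F hF =>
    (hI.prod measurableSet_Ico).inter (measurableSet_eq_fun (by fun_prop) measurable_const)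
  rw [Measure.volume_eq_prod, Measure.prod_apply (hmeas (fun a u => -(a * u)) (by fun_prop)),
    Measure.prod_apply (hmeas (· * ·) (by fun_prop))]
  refine lintegral_congr fun x => ?_
  rw [hfiber (fun a u => -(a * u)), hfiber (· * ·)]
  simp_rw [← mul_neg]
  exact volume_setOf_mem_dyadicI_neg_haarI k m (fun u => x ∈ I ∧ f x * u + G (x, y₀) = v)

def higherLayersSum (n k : ℕ) (ε : ℕ → ℕ → ℕ → ℝ) (p : ℝ × ℝ) : ℝ :=
  ∑ j ∈ Finset.Ico (k + 1) (n + 1), ∑ m ∈ Finset.range (2 ^ j),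
    ∑ m' ∈ Finset.range (2 ^ (n - j)), ε j m m' * haarR j m (n - j) m' p

lemma measurable_higherLayersSum (n k : ℕ) (ε : ℕ → ℕ → ℕ → ℝ) :
    Measurable (higherLayersSum n k ε) := by
  unfold higherLayersSum haarR
  fun_prop

lemma higherLayersSum_eq_of_mem_dyadicI (n k M : ℕ) (ε : ℕ → ℕ → ℕ → ℝ) (x : ℝ) {y y' : ℝ}
    (hy : y ∈ dyadicI (n - k) M) (hy' : y' ∈ dyadicI (n - k) M) :
    higherLayersSum n k ε (x, y) = higherLayersSum n k ε (x, y') := by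
  refine Finset.sum_congr rfl fun j hj => Finset.sum_congr rfl fun m _ =>
    Finset.sum_congr rfl fun m' _ => ?_
  rw [Finset.mem_Ico] at hj
  rw [haarR, haarR, haarI_eq_of_mem_dyadicI (by omega) hy hy']

theorem flip_sign_level_sets_general (n k m0 m0' : ℕ)
    (ε : ℕ → ℕ → ℕ → ℝ) (v : ℤ) :
    volume {p : ℝ × ℝ | p ∈ (dyadicI k m0) ×ˢ (dyadicI (n-k) m0') ∧
        haarR k m0 (n-k) m0' p +
          (∑ j ∈ Finset.Ico (k+1) (n+1), ∑ m ∈ Finset.range (2^j),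
            ∑ m' ∈ Finset.range (2^(n-j)), ε j m m' * haarR j m (n-j) m' p) = (v : ℝ)}
    = volume {p : ℝ × ℝ | p ∈ (dyadicI k m0) ×ˢ (dyadicI (n-k) m0') ∧
        - haarR k m0 (n-k) m0' p +
          (∑ j ∈ Finset.Ico (k+1) (n+1), ∑ m ∈ Finset.range (2^j),
            ∑ m' ∈ Finset.range (2^(n-j)), ε j m m' * haarR j m (n-j) m' p) = (v : ℝ)} :=
  (volume_setOf_neg_mul_haarI_add_eq measurableSet_Ico (n - k) m0' (measurable_haarI k m0)
    (measurable_higherLayersSum n k ε)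
    (fun x _ hy _ hy' => higherLayersSum_eq_of_mem_dyadicI n k m0' ε x hy hy') v).symm

/-- Flipping the sign of a rectangle `R₁` of layer `L_k` does not change the distribution, on
`R₁`, of the sum over the higher layers. -/
theorem flip_sign_level_sets (n k m0 m0' : ℕ) (hk : k ≤ n)
    (hm0 : m0 < 2^k) (hm0' : m0' < 2^(n-k))
    (ε : ℕ → ℕ → ℕ → ℝ) (hε : ∀ j m m', ε j m m' = 1 ∨ ε j m m' = -1) (v : ℤ) :
    volume {p : ℝ × ℝ | p ∈ (dyadicI k m0) ×ˢ (dyadicI (n-k) m0') ∧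
        haarR k m0 (n-k) m0' p +
          (∑ j ∈ Finset.Ico (k+1) (n+1), ∑ m ∈ Finset.range (2^j),
            ∑ m' ∈ Finset.range (2^(n-j)), ε j m m' * haarR j m (n-j) m' p) = (v : ℝ)}
    = volume {p : ℝ × ℝ | p ∈ (dyadicI k m0) ×ˢ (dyadicI (n-k) m0') ∧
        - haarR k m0 (n-k) m0' p +
          (∑ j ∈ Finset.Ico (k+1) (n+1), ∑ m ∈ Finset.range (2^j),
            ∑ m' ∈ Finset.range (2^(n-j)), ε j m m' * haarR j m (n-j) m' p) = (v : ℝ)} :=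
  flip_sign_level_sets_general n k m0 m0' ε v
end
end

section
/- For any n ≥ 0 and any signs ε_R ∈ {-1,1}, the set of points where ∑_{|R|=2^{-n}} ε_R h_R attains the value n+1 is a union of exactly 2^{n+1} dyadic squares of side length 2^{-n-1}. -/
open MeasureTheory Finset

noncomputable section

/-!
On a dyadic square of side `2^{-n-1}`, with indices `(a, b)`, exactly one rectangle of each of
the `n + 1` layers is nonzero, and it contributes `±1`; so the sum equals `n + 1` there exactly
when every layer contributes `+1`. Layer `k` contributes `ε · (sign of digit n-k of a) ·
(sign of digit k of b)`, where the sign `ε` depends on `a` and on the digits of `b` above `k`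
only. For fixed `a` the condition therefore prescribes each digit of `b` in terms of the higher
ones, so exactly one `b < 2^{n+1}` works, and there are `2^{n+1}` maximal squares.
-/

theorem existsUnique_lt_two_pow_forall_digit_iff (N : ℕ) (P : ℕ → ℕ → Prop) :
    ∃! b, b < 2 ^ N ∧ ∀ k < N, (b / 2 ^ k % 2 = 1 ↔ P k (b / 2 ^ (k + 1))) := by
  induction N generalizing P with
  | zero => exact ⟨0, by simp, fun b hb => by simpa using hb.1⟩
  | succ N ih =>
    have halve : ∀ b, (b < 2 ^ (N + 1) ∧ ∀ k < N + 1, (b / 2 ^ k % 2 = 1 ↔ P k (b / 2 ^ (k + 1))))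
        ↔ (b / 2 < 2 ^ N ∧ ∀ k < N, (b / 2 / 2 ^ k % 2 = 1 ↔ P (k + 1) (b / 2 / 2 ^ (k + 1))))
          ∧ (b % 2 = 1 ↔ P 0 (b / 2)) := fun b => by
      have shift : ∀ k, b / 2 ^ (k + 1) = b / 2 / 2 ^ k := fun k => by
        rw [Nat.div_div_eq_div_mul, pow_succ']
      rw [Nat.div_lt_iff_lt_mul (by positivity), ← pow_succ]
      constructor
      · rintro ⟨hb, h⟩
        exact ⟨⟨hb, fun k hk => by simpa only [shift] using h (k + 1) (by omega)⟩,
          by simpa using h 0 (by omega)⟩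
      · rintro ⟨⟨hb, h⟩, h0⟩
        refine ⟨hb, fun k hk => ?_⟩
        cases k with
        | zero => simpa using h0
        | succ k => simpa only [shift] using h k (by omega)
    obtain ⟨c, hc, hc_unique⟩ := ih fun k => P (k + 1)
    obtain ⟨d, hd2, hd⟩ : ∃ d < 2, (d = 1 ↔ P 0 c) := by
      by_cases h : P 0 c
      exacts [⟨1, by norm_num, by simp [h]⟩, ⟨0, by norm_num, by simp [h]⟩]
    have hdiv : (2 * c + d) / 2 = c := by omega
    have hmod : (2 * c + d) % 2 = d := by omega
    refine ⟨2 * c + d, (halve _).2 ⟨by rwa [hdiv], by rwa [hdiv, hmod]⟩, fun b hb => ?_⟩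
    obtain ⟨hb, hb0⟩ := (halve b).1 hb
    rw [hc_unique _ hb, ← hd] at hb0
    have := Nat.div_add_mod b 2
    rw [hc_unique _ hb] at this
    omega

lemma card_filter_range_product_of_existsUnique {M : ℕ} (R : ℕ → ℕ → Prop)
    [∀ a, DecidablePred (R a)] (h : ∀ a < M, ∃! b, b < M ∧ R a b) :
    #{q ∈ range M ×ˢ range M | R q.1 q.2} = M := by
  rw [card_filter, sum_product]
  calc ∑ a ∈ range M, ∑ b ∈ range M, (if R a b then 1 else 0)
      = ∑ a ∈ range M, #{b ∈ range M | R a b} := by simp only [card_filter]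
    _ = ∑ _a ∈ range M, 1 := sum_congr rfl fun a ha => by
        obtain ⟨b, hb, hb_unique⟩ := h a (mem_range.1 ha)
        exact card_eq_one.2 ⟨b, eq_singleton_iff_unique_mem.2
          ⟨by simpa using hb, fun b' hb' => hb_unique b' (by simpa using hb')⟩⟩
    _ = M := by simp

lemma mem_Ico_mul_two_zpow_iff {k : ℕ} {c d x : ℝ} :
    x ∈ Set.Ico (c * 2 ^ (-(k : ℤ))) (d * 2 ^ (-(k : ℤ))) ↔ c ≤ 2 ^ k * x ∧ 2 ^ k * x < d := by
  have h : (0 : ℝ) < 2 ^ k := by positivity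
  rw [zpow_neg, zpow_natCast, ← div_eq_mul_inv, ← div_eq_mul_inv, Set.mem_Ico, div_le_iff₀ h,
    lt_div_iff₀ h, mul_comm x]

lemma mem_dyadicI_iff {k m : ℕ} {x : ℝ} : x ∈ dyadicI k m ↔ ⌊2 ^ k * x⌋ = m := by
  rw [dyadicI, mem_Ico_mul_two_zpow_iff, Int.floor_eq_iff]
  push_cast
  rfl

lemma mem_Ico_zero_one_iff_exists_dyadicI (N : ℕ) {x : ℝ} :
    x ∈ Set.Ico 0 1 ↔ ∃ a < 2 ^ N, x ∈ dyadicI N a := by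
  have h2N : (0 : ℝ) < 2 ^ N := by positivity
  have hfloor : x ∈ Set.Ico 0 1 ↔ 0 ≤ ⌊2 ^ N * x⌋ ∧ ⌊2 ^ N * x⌋ < (2 ^ N : ℕ) := by
    rw [Int.floor_nonneg, Int.floor_lt, Int.cast_natCast, Nat.cast_pow, Nat.cast_ofNat,
      mul_nonneg_iff_of_pos_left h2N, mul_lt_iff_lt_one_right h2N, Set.mem_Ico]
  simp only [hfloor, mem_dyadicI_iff]
  constructor
  · rintro ⟨h0, h1⟩
    obtain ⟨a, ha⟩ := Int.eq_ofNat_of_zero_le h0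
    exact ⟨a, by omega, ha⟩
  · rintro ⟨a, ha, hxa⟩
    omega

lemma floor_two_pow_mul_of_mem_dyadicI {N j a : ℕ} {x : ℝ} (hx : x ∈ dyadicI (N + j) a) :
    ⌊2 ^ N * x⌋ = (a / 2 ^ j : ℕ) := by
  rw [mem_dyadicI_iff] at hx
  have : (2 : ℝ) ^ N * x = 2 ^ (N + j) * x / (2 ^ j : ℕ) := by
    push_cast; rw [pow_add]; field_simp
  rw [this, Int.floor_div_natCast, hx, Int.natCast_div]

lemma haarI_eq_ite_floor (k m : ℕ) (x : ℝ) :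
    haarI k m x = if ⌊2 ^ (k + 1) * x⌋ = 2 * m then -1
      else if ⌊2 ^ (k + 1) * x⌋ = 2 * m + 1 then 1 else 0 := by
  simp only [haarI, mem_Ico_mul_two_zpow_iff, Int.floor_eq_iff, pow_succ]
  push_cast
  congr 1 <;> [skip; congr 1] <;> apply propext <;>
    constructor <;> rintro ⟨_, _⟩ <;> constructor <;> linarith

def digitSign (c i : ℕ) : ℝ := if c / 2 ^ i % 2 = 1 then 1 else -1

lemma digitSign_eq_one_or (c i : ℕ) : digitSign c i = 1 ∨ digitSign c i = -1 := by
  unfold digitSign; split_ifs <;> simp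

lemma mul_eq_one_or_of_eq_one_or {x y : ℝ} (hx : x = 1 ∨ x = -1) (hy : y = 1 ∨ y = -1) :
    x * y = 1 ∨ x * y = -1 := by
  rcases hx with rfl | rfl <;> rcases hy with rfl | rfl <;> norm_num

lemma mul_digitSign_eq_one_iff {x : ℝ} (hx : x = 1 ∨ x = -1) (c i : ℕ) :
    x * digitSign c i = 1 ↔ (c / 2 ^ i % 2 = 1 ↔ x = 1) := by
  unfold digitSign
  rcases hx with rfl | rfl <;> split_ifs <;> norm_num [*]

lemma haarI_of_mem_dyadicI {k j a : ℕ} {x : ℝ} (hx : x ∈ dyadicI (k + 1 + j) a) (m : ℕ) :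
    haarI k m x = if a / 2 ^ (j + 1) = m then digitSign a j else 0 := by
  rw [haarI_eq_ite_floor, floor_two_pow_mul_of_mem_dyadicI hx, digitSign, pow_succ,
    ← Nat.div_div_eq_div_mul]
  generalize a / 2 ^ j = q
  norm_cast
  split_ifs <;> first | rfl | omega

def layerValue (n : ℕ) (ε : ℕ → ℕ → ℕ → ℝ) (a b k : ℕ) : ℝ :=
  ε k (a / 2 ^ (n - k + 1)) (b / 2 ^ (k + 1)) * digitSign a (n - k) * digitSign b k

lemma signedSum_eq_sum_layerValue (ε : ℕ → ℕ → ℕ → ℝ) {n a b : ℕ} (ha : a < 2 ^ (n + 1))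
    (hb : b < 2 ^ (n + 1)) {p : ℝ × ℝ} (hpa : p.1 ∈ dyadicI (n + 1) a)
    (hpb : p.2 ∈ dyadicI (n + 1) b) :
    signedSum n ε p = ∑ k ∈ range (n + 1), layerValue n ε a b k := by
  refine sum_congr rfl fun k hk => ?_
  have hkn : k ≤ n := Nat.lt_succ_iff.1 (mem_range.1 hk)
  have hx : ∀ m, haarI k m p.1 = if a / 2 ^ (n - k + 1) = m then digitSign a (n - k) else 0 :=
    haarI_of_mem_dyadicI (by rwa [show k + 1 + (n - k) = n + 1 by omega])
  have hy : ∀ m, haarI (n - k) m p.2 = if b / 2 ^ (k + 1) = m then digitSign b k else 0 :=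
    haarI_of_mem_dyadicI (by rwa [show n - k + 1 + k = n + 1 by omega])
  have hxa : a / 2 ^ (n - k + 1) < 2 ^ k :=
    Nat.div_lt_of_lt_mul (by rwa [← pow_add, show n - k + 1 + k = n + 1 by omega])
  have hyb : b / 2 ^ (k + 1) < 2 ^ (n - k) :=
    Nat.div_lt_of_lt_mul (by rwa [← pow_add, show k + 1 + (n - k) = n + 1 by omega])
  simp only [haarR, hx, hy, mul_ite, ite_mul, mul_zero, zero_mul, sum_ite_eq, mem_range, hxa, hyb,
    if_true, layerValue]
  ring

lemma layerValue_le_one {ε : ℕ → ℕ → ℕ → ℝ}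
    (hε : ∀ j m m', ε j m m' = 1 ∨ ε j m m' = -1) (n a b k : ℕ) : layerValue n ε a b k ≤ 1 := by
  rw [layerValue]
  rcases mul_eq_one_or_of_eq_one_or (mul_eq_one_or_of_eq_one_or (hε _ _ _)
    (digitSign_eq_one_or a (n - k))) (digitSign_eq_one_or b k) with h | h <;> linarith

lemma layerValue_eq_one_iff {ε : ℕ → ℕ → ℕ → ℝ}
    (hε : ∀ j m m', ε j m m' = 1 ∨ ε j m m' = -1) (n a b k : ℕ) :
    layerValue n ε a b k = 1 ↔ (b / 2 ^ k % 2 = 1 ↔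
      ε k (a / 2 ^ (n - k + 1)) (b / 2 ^ (k + 1)) * digitSign a (n - k) = 1) :=
  mul_digitSign_eq_one_iff (mul_eq_one_or_of_eq_one_or (hε _ _ _) (digitSign_eq_one_or _ _)) _ _

def IsMaxSquare (n : ℕ) (ε : ℕ → ℕ → ℕ → ℝ) (a b : ℕ) : Prop :=
  ∀ k < n + 1, layerValue n ε a b k = 1

lemma sum_layerValue_eq_iff_isMaxSquare {ε : ℕ → ℕ → ℕ → ℝ}
    (hε : ∀ j m m', ε j m m' = 1 ∨ ε j m m' = -1) (n a b : ℕ) :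
    ∑ k ∈ range (n + 1), layerValue n ε a b k = n + 1 ↔ IsMaxSquare n ε a b := by
  have := sum_eq_sum_iff_of_le fun k (_ : k ∈ range (n + 1)) => layerValue_le_one hε n a b k
  simpa [IsMaxSquare] using this

lemma existsUnique_isMaxSquare {ε : ℕ → ℕ → ℕ → ℝ}
    (hε : ∀ j m m', ε j m m' = 1 ∨ ε j m m' = -1) (n a : ℕ) :
    ∃! b, b < 2 ^ (n + 1) ∧ IsMaxSquare n ε a b := by
  simpa only [IsMaxSquare, layerValue_eq_one_iff hε] using
    existsUnique_lt_two_pow_forall_digit_iff (n + 1)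
      fun k m => ε k (a / 2 ^ (n - k + 1)) m * digitSign a (n - k) = 1

/-- The set where the signed small ball sum attains the value `n+1` is a union of exactly
`2^{n+1}` dyadic squares of side `2^{-n-1}`. -/
theorem max_level_set_union_squares (n : ℕ) (ε : ℕ → ℕ → ℕ → ℝ)
    (hε : ∀ j m m', ε j m m' = 1 ∨ ε j m m' = -1) :
    ∃ S : Finset (ℕ × ℕ), S.card = 2^(n+1) ∧
      (∀ q ∈ S, q.1 < 2^(n+1) ∧ q.2 < 2^(n+1)) ∧
      {p : ℝ × ℝ | p.1 ∈ Set.Ico (0:ℝ) 1 ∧ p.2 ∈ Set.Ico (0:ℝ) 1 ∧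
          signedSum n ε p = (n : ℝ) + 1}
        = ⋃ q ∈ S, (dyadicI (n+1) q.1) ×ˢ (dyadicI (n+1) q.2) := by
  classical
  refine ⟨{q ∈ range (2 ^ (n + 1)) ×ˢ range (2 ^ (n + 1)) | IsMaxSquare n ε q.1 q.2},
    card_filter_range_product_of_existsUnique _ fun a _ => existsUnique_isMaxSquare hε n a,
    fun q hq => by simpa using (mem_filter.1 hq).1, ?_⟩
  ext p
  simp only [Set.mem_ofPred_eq, Set.mem_iUnion, Set.mem_prod, mem_filter, mem_product, mem_range,
    exists_prop, Prod.exists, mem_Ico_zero_one_iff_exists_dyadicI (n + 1)]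
  constructor
  · rintro ⟨⟨a, ha, hpa⟩, ⟨b, hb, hpb⟩, hsum⟩
    rw [signedSum_eq_sum_layerValue ε ha hb hpa hpb, sum_layerValue_eq_iff_isMaxSquare hε] at hsum
    exact ⟨a, b, ⟨⟨ha, hb⟩, hsum⟩, hpa, hpb⟩
  · rintro ⟨a, b, ⟨⟨ha, hb⟩, hmax⟩, hpa, hpb⟩
    rw [signedSum_eq_sum_layerValue ε ha hb hpa hpb, sum_layerValue_eq_iff_isMaxSquare hε]
    exact ⟨⟨a, ha, hpa⟩, ⟨b, hb, hpb⟩, hmax⟩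
end
end
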